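/- Let (x_α)_{α∈I} be a bounded net in a CAT(0) space X, indexed by a directed set I, that converges weakly to a point x ∈ X. Then there exist indices α_1 ≤ α_2 ≤ α_3 ≤ … in I such that the sequence (x_{α_i}) converges weakly to x. -/

import Mathlib

open Filter Topology Metric Set

/-- `m` is a midpoint of `x` and `y`. -/
def IsMidpoint {X : Type*} [MetricSpace X] (x y m : X) : Prop :=
  dist x m = dist x y / 2 ∧ dist y m = dist x y / 2

/-- A CAT(0) space: a complete metric space with midpoints satisfying the
CN-inequality of Bruhat–Tits. -/
def IsCAT0 (X : Type*) [MetricSpace X] : Prop :=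
  CompleteSpace X ∧
    (∀ x y : X, ∃ m : X, IsMidpoint x y m) ∧
    (∀ x y z m : X, IsMidpoint x y m →
      dist z m ^ 2 ≤ dist z x ^ 2 / 2 + dist z y ^ 2 / 2 - dist x y ^ 2 / 4)

/-- `G` is a (compact) geodesic segment starting at `x`: the image of an
isometric embedding of a compact interval `[0, L]` whose left endpoint is
mapped to `x`. -/
def IsGeodesicSegmentFrom {X : Type*} [MetricSpace X] (x : X) (G : Set X) : Prop :=
  ∃ (L : ℝ) (γ : ℝ → X), 0 ≤ L ∧ γ 0 = x ∧
    (∀ s ∈ Icc (0:ℝ) L, ∀ t ∈ Icc (0:ℝ) L, dist (γ s) (γ t) = |s - t|) ∧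
    G = γ '' Icc (0:ℝ) L

/-- `G` is a geodesic segment from `x` to `y`. -/
def IsGeodesicSegmentBetween {X : Type*} [MetricSpace X] (x y : X) (G : Set X) : Prop :=
  ∃ γ : ℝ → X, γ 0 = x ∧ γ (dist x y) = y ∧
    (∀ s ∈ Icc (0:ℝ) (dist x y), ∀ t ∈ Icc (0:ℝ) (dist x y),
      dist (γ s) (γ t) = |s - t|) ∧
    G = γ '' Icc (0:ℝ) (dist x y)

/-- `p` is a nearest point of `C` to `z` (a closest-point projection of `z`
onto `C`). -/
def IsNearestPoint {X : Type*} [MetricSpace X] (z : X) (C : Set X) (p : X) : Prop :=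
  p ∈ C ∧ ∀ q ∈ C, dist z p ≤ dist z q

/-- Weak (Δ-)convergence of a net `u` (indexed by a preordered set) to `x`:
for every geodesic segment `G` starting at `x`, the closest-point projections
of the `u i` onto `G` converge to `x` in the metric. -/
def WeakConv {X : Type*} [MetricSpace X] {I : Type*} [Preorder I]
    (u : I → X) (x : X) : Prop :=
  ∀ G : Set X, IsGeodesicSegmentFrom x G →
    ∀ p : I → X, (∀ i, IsNearestPoint (u i) G (p i)) → Tendsto p atTop (𝓝 x)

/-- The sets that are closed in the weak topology `T_Δ`: sets containing all
weak limits of bounded sequences of their elements. -/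
def TdeltaClosed {X : Type*} [MetricSpace X] (A : Set X) : Prop :=
  ∀ u : ℕ → X, (∀ n, u n ∈ A) → Bornology.IsBounded (Set.range u) →
    ∀ x : X, WeakConv u x → x ∈ A

/-- `T` is the weak topology `T_Δ`: its closed sets are exactly the weakly
sequentially closed sets. -/
def IsWeakTopology {X : Type*} [MetricSpace X] (T : TopologicalSpace X) : Prop :=
  ∀ A : Set X, @IsClosed X T A ↔ TdeltaClosed A

/-- Geodesic convexity of a subset of a metric space. -/
def GeodesicallyConvex {X : Type*} [MetricSpace X] (C : Set X) : Prop :=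
  ∀ x ∈ C, ∀ y ∈ C, ∀ G : Set X, IsGeodesicSegmentBetween x y G → G ⊆ C

/-- The coconvex topology `T_co`: the coarsest topology on `X` in which every
metrically closed, (geodesically) convex set is closed. -/
def coconvexTopology (X : Type*) [MetricSpace X] : TopologicalSpace X :=
  TopologicalSpace.generateFrom
    {U : Set X | ∃ C : Set X, IsClosed C ∧ GeodesicallyConvex C ∧ U = Cᶜ}

/-!
For each point `q` fix a geodesic segment from `x` through `q` (a complete space with midpoints is
geodesic); weak convergence of the net says that the projections of the `u i` onto it tend to `x`.
Since `I` is directed, a diagonal choice gives indices `α 0 ≤ α 1 ≤ ⋯` along which this holds for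
every `q` in the countable set `Q` generated by the `u (α n)` under taking midpoints. By the
triangle inequality through the projection, the `u (α n)` are then asymptotically at least as close
to `x` as to any point of the closed convex set `closure Q`.

If the projections `p n` of `u (α n)` onto some segment `G` from `x` stayed `δ` away from `x` along
a subsequence, the projection inequality on `G` would make `u (α n)` closer to `p n` than to `x` by
a fixed amount. Passing to a further subsequence with `p n → p₀` and projecting `p₀` onto
`closure Q` gives a point `p'` that is at least as close as `p₀` to every `u (α n)`, contradicting
the previous paragraph.
-/

section Projection

variable {X : Type*} [MetricSpace X]

def MidpointClosed (S : Set X) : Prop :=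
  ∀ a ∈ S, ∀ b ∈ S, ∃ m ∈ S, IsMidpoint a b m

theorem MidpointClosed.closure (hX : IsCAT0 X) {S : Set X} (hS : MidpointClosed S) :
    MidpointClosed (closure S) := by
  intro a ha b hb
  obtain ⟨m, hm⟩ := hX.2.1 a b
  refine ⟨m, Metric.mem_closure_iff.2 fun ε hε => ?_, hm⟩
  obtain ⟨v, hvS, hva⟩ := mem_closure_iff_seq_limit.1 ha
  obtain ⟨w, hwS, hwb⟩ := mem_closure_iff_seq_limit.1 hb
  choose c hcS hc using fun n => hS (v n) (hvS n) (w n) (hwS n)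
  -- The CN inequality bounds `dist m (c n) ^ 2` by this sequence, and its limit
  -- `dist m a ^ 2 / 2 + dist m b ^ 2 / 2 - dist a b ^ 2 / 4` vanishes as `m` is a midpoint.
  have hbound : Tendsto (fun n => dist m (v n) ^ 2 / 2 + dist m (w n) ^ 2 / 2
      - dist (v n) (w n) ^ 2 / 4) atTop (𝓝 0) := by
    have hlim := ((((tendsto_const_nhds (x := m)).dist hva).pow 2).div_const 2).add
      ((((tendsto_const_nhds (x := m)).dist hwb).pow 2).div_const 2) |>.sub
      (((hva.dist hwb).pow 2).div_const 4)
    convert hlim using 2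
    rw [dist_comm m a, dist_comm m b, hm.1, hm.2]
    ring
  obtain ⟨n, hn⟩ := (hbound.eventually (gt_mem_nhds (pow_pos hε 2))).exists
  refine ⟨c n, hcS n, lt_of_pow_lt_pow_left₀ 2 hε.le ?_⟩
  linarith [hX.2.2 (v n) (w n) m (c n) (hc n)]

theorem IsCAT0.dist_sq_add_dist_sq_le (hX : IsCAT0 X) {S : Set X} (hS : MidpointClosed S)
    {z p q : X} (hp : IsNearestPoint z S p) (hq : q ∈ S) :
    dist z p ^ 2 + dist p q ^ 2 ≤ dist z q ^ 2 := by
  -- Moving from `p` halfway towards `q` repeatedly improves the coefficient `1 - 2⁻ᵏ`.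
  have key : ∀ k : ℕ, ∀ q ∈ S,
      dist z p ^ 2 + (1 - (1 / 2 : ℝ) ^ k) * dist p q ^ 2 ≤ dist z q ^ 2 := by
    intro k
    induction k with
    | zero =>
      intro q hq
      nlinarith [hp.2 q hq, dist_nonneg (x := z) (y := p)]
    | succ k ih =>
      intro q hq
      obtain ⟨m, hmS, hm⟩ := hS p hp.1 q hq
      have hcn := hX.2.2 p q z m hm
      have him := ih m hmS
      rw [hm.1] at him
      rw [pow_succ (1 / 2 : ℝ) k]
      nlinarith
  have hlim : Tendsto (fun k : ℕ => dist z p ^ 2 + (1 - (1 / 2 : ℝ) ^ k) * dist p q ^ 2) atTop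
      (𝓝 (dist z p ^ 2 + (1 - 0) * dist p q ^ 2)) :=
    tendsto_const_nhds.add (((tendsto_pow_atTop_nhds_zero_of_lt_one (by norm_num)
      (by norm_num)).const_sub 1).mul tendsto_const_nhds)
  simpa using le_of_tendsto' hlim fun k => key k q hq

theorem IsCAT0.dist_le_of_isNearestPoint (hX : IsCAT0 X) {S : Set X} (hS : MidpointClosed S)
    {y p q : X} (hp : IsNearestPoint y S p) (hq : q ∈ S) : dist q p ≤ dist q y := by
  have := hX.dist_sq_add_dist_sq_le hS hp hq
  rw [dist_comm q p, dist_comm q y]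
  nlinarith [dist_nonneg (x := y) (y := p), dist_nonneg (x := p) (y := q),
    dist_nonneg (x := y) (y := q)]

theorem IsCompact.exists_isNearestPoint {G : Set X} (hG : IsCompact G) (hne : G.Nonempty)
    (z : X) : ∃ p, IsNearestPoint z G p := by
  obtain ⟨p, hpG, hmin⟩ := hG.exists_isMinOn hne (continuous_const.dist continuous_id).continuousOn
  exact ⟨p, hpG, fun q hq => hmin hq⟩

theorem IsCAT0.exists_isNearestPoint (hX : IsCAT0 X) {C : Set X} (hC : IsClosed C)
    (hCm : MidpointClosed C) (hne : C.Nonempty) (z : X) : ∃ p, IsNearestPoint z C p := by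
  have := hX.1
  set δ := infDist z C
  have hex : ∀ n : ℕ, ∃ w ∈ C, dist z w < δ + 1 / (n + 1) := fun n =>
    (infDist_lt_iff hne).1 (lt_add_of_pos_right δ Nat.one_div_pos_of_nat)
  choose w hwC hw using hex
  have hδw : ∀ n, δ ≤ dist z (w n) := fun n => infDist_le_dist_of_mem (hwC n)
  have hlim : Tendsto (fun n => dist z (w n)) atTop (𝓝 δ) := by
    refine tendsto_of_tendsto_of_tendsto_of_le_of_le tendsto_const_nhds ?_ hδw fun n => (hw n).le
    simpa using (tendsto_const_nhds (x := δ)).add tendsto_one_div_add_atTop_nhds_zero_nat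
  have hexcess : Tendsto (fun n => dist z (w n) ^ 2 - δ ^ 2) atTop (𝓝 0) := by
    have := (hlim.pow 2).sub_const (δ ^ 2)
    rwa [sub_self] at this
  -- A midpoint of `w i` and `w j` lies in `C`, hence at distance at least `δ` from `z`.
  have hpair : ∀ i j, dist (w i) (w j) ^ 2
      ≤ 2 * (dist z (w i) ^ 2 - δ ^ 2) + 2 * (dist z (w j) ^ 2 - δ ^ 2) := by
    intro i j
    obtain ⟨m, hmC, hm⟩ := hCm _ (hwC i) _ (hwC j)
    have hδm : δ ≤ dist z m := infDist_le_dist_of_mem hmC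
    nlinarith [hX.2.2 (w i) (w j) z m hm, infDist_nonneg (x := z) (s := C)]
  have hcauchy : CauchySeq w := by
    refine Metric.cauchySeq_iff'.2 fun ε hε => ?_
    obtain ⟨N, hN⟩ := eventually_atTop.1
      (hexcess.eventually (gt_mem_nhds (by positivity : (0 : ℝ) < ε ^ 2 / 4)))
    refine ⟨N, fun n hn => lt_of_pow_lt_pow_left₀ 2 hε.le ?_⟩
    linarith [hpair n N, hN n hn, hN N le_rfl]
  obtain ⟨p, hp⟩ := cauchySeq_tendsto_of_complete hcauchy
  have hpC : p ∈ C := hC.mem_of_tendsto hp (Eventually.of_forall hwC)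
  have hzp : dist z p = δ := tendsto_nhds_unique (tendsto_const_nhds.dist hp) hlim
  exact ⟨p, hpC, fun q hq => hzp ▸ infDist_le_dist_of_mem hq⟩

end Projection

section DyadicChain

variable {X : Type*} (μ : X → X → X) (a b : X)

/-- Level `k` of the dyadic subdivision of `[a, b]` by iterated midpoints:
`dyadicChain μ a b k i` is the point with parameter `i / 2 ^ k`. -/
noncomputable def dyadicChain : ℕ → ℕ → X
  | 0, i => if i = 0 then a else b
  | k + 1, i =>
    if i % 2 = 0 then dyadicChain k (i / 2)
    else μ (dyadicChain k (i / 2)) (dyadicChain k (i / 2 + 1))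

@[simp]
theorem dyadicChain_zero_right (k : ℕ) : dyadicChain μ a b k 0 = a := by
  induction k with
  | zero => simp [dyadicChain]
  | succ k ih => simp [dyadicChain, ih]

@[simp]
theorem dyadicChain_two_pow (k : ℕ) : dyadicChain μ a b k (2 ^ k) = b := by
  induction k with
  | zero => simp [dyadicChain]
  | succ k ih => simp [dyadicChain, pow_succ, ih]

theorem dyadicChain_succ_two_mul (k i : ℕ) :
    dyadicChain μ a b (k + 1) (2 * i) = dyadicChain μ a b k i := by
  simp [dyadicChain]

theorem dyadicChain_succ_two_mul_add_one (k i : ℕ) :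
    dyadicChain μ a b (k + 1) (2 * i + 1)
      = μ (dyadicChain μ a b k i) (dyadicChain μ a b k (i + 1)) := by
  simp [dyadicChain, Nat.add_mod, Nat.add_div]

end DyadicChain

section Geodesic

variable {X : Type*} [MetricSpace X]

theorem dist_eq_abs_sub_mul_of_dist_succ_le {f : ℕ → X} {N : ℕ} {c : ℝ}
    (hstep : ∀ i < N, dist (f i) (f (i + 1)) ≤ c) (hends : dist (f 0) (f N) = N * c)
    {i j : ℕ} (hi : i ≤ N) (hj : j ≤ N) : dist (f i) (f j) = |(i : ℝ) - j| * c := by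
  have hle : ∀ {m n : ℕ}, m ≤ n → n ≤ N → dist (f m) (f n) ≤ ((n : ℝ) - m) * c := by
    intro m n hmn hnN
    have := dist_le_Ico_sum_of_dist_le hmn fun {k} _ hk => hstep k (hk.trans_le hnN)
    simpa [Nat.cast_sub hmn] using this
  -- The chain `f 0, …, f N` realises the distance of its ends, so no step can be short.
  have heq : ∀ {m n : ℕ}, m ≤ n → n ≤ N → dist (f m) (f n) = ((n : ℝ) - m) * c := by
    intro m n hmn hnN
    have h0m := hle (Nat.zero_le m) (hmn.trans hnN)
    have hnN' := hle hnN le_rfl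
    have htri := dist_triangle4 (f 0) (f m) (f n) (f N)
    rw [hends] at htri
    push_cast at h0m
    linarith [hle hmn hnN]
  rcases le_total i j with hij | hji
  · rw [heq hij hj, abs_sub_comm, abs_of_nonneg (sub_nonneg.2 (Nat.cast_le.2 hij))]
  · rw [dist_comm, heq hji hi, abs_of_nonneg (sub_nonneg.2 (Nat.cast_le.2 hji))]

variable {μ : X → X → X} (a b : X)

theorem dist_dyadicChain (hμ : ∀ x y, IsMidpoint x y (μ x y)) (k : ℕ) {i j : ℕ}
    (hi : i ≤ 2 ^ k) (hj : j ≤ 2 ^ k) :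
    dist (dyadicChain μ a b k i) (dyadicChain μ a b k j) = |(i : ℝ) - j| * (dist a b / 2 ^ k) := by
  induction k generalizing i j with
  | zero =>
    interval_cases i <;> interval_cases j <;> simp [dyadicChain, dist_comm]
  | succ k ih =>
    refine dist_eq_abs_sub_mul_of_dist_succ_le (fun i hi => ?_) ?_ hi hj
    · have hstep : ∀ m < 2 ^ k, dist (dyadicChain μ a b k m) (dyadicChain μ a b k (m + 1))
          = dist a b / 2 ^ k := fun m hm => by
        rw [ih hm.le hm, Nat.cast_succ, sub_add_cancel_left, abs_neg, abs_one, one_mul]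
      obtain ⟨m, rfl | rfl⟩ := Nat.even_or_odd' i
      · rw [dyadicChain_succ_two_mul, dyadicChain_succ_two_mul_add_one, (hμ _ _).1,
          hstep m (by omega), pow_succ, div_div]
      · rw [dyadicChain_succ_two_mul_add_one, show 2 * m + 1 + 1 = 2 * (m + 1) by ring,
          dyadicChain_succ_two_mul, dist_comm, (hμ _ _).2, hstep m (by omega), pow_succ, div_div]
    · rw [dyadicChain_zero_right, dyadicChain_two_pow]
      push_cast
      field_simp

theorem cauchySeq_dyadicChain_floor (hμ : ∀ x y, IsMidpoint x y (μ x y)) {s : ℝ}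
    (hs : s ∈ Icc (0 : ℝ) 1) : CauchySeq fun n => dyadicChain μ a b n ⌊s * 2 ^ n⌋₊ := by
  have hle : ∀ n : ℕ, ⌊s * 2 ^ n⌋₊ ≤ 2 ^ n := fun n =>
    Nat.floor_le_of_le (by exact_mod_cast mul_le_of_le_one_left (by positivity) hs.2)
  have hhalf : ∀ n : ℕ, ⌊s * 2 ^ (n + 1)⌋₊ / 2 = ⌊s * 2 ^ n⌋₊ := fun n => by
    rw [← Nat.floor_div_ofNat, pow_succ, ← mul_assoc, mul_div_assoc, div_self two_ne_zero,
      mul_one]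
  refine cauchySeq_of_le_geometric_two (C := dist a b) fun n => ?_
  have hchild : ⌊s * 2 ^ (n + 1)⌋₊ = 2 * ⌊s * 2 ^ n⌋₊ ∨
      ⌊s * 2 ^ (n + 1)⌋₊ = 2 * ⌊s * 2 ^ n⌋₊ + 1 := by
    have := Nat.div_add_mod ⌊s * 2 ^ (n + 1)⌋₊ 2
    rw [hhalf] at this
    omega
  rw [← dyadicChain_succ_two_mul, dist_dyadicChain a b hμ (n + 1) (by grind [hle n])
    (hle (n + 1)), div_div, ← pow_succ']
  refine mul_le_of_le_one_left (by positivity) ?_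
  rcases hchild with h | h <;> rw [h] <;> simp

theorem dist_dyadicChain_floor (hμ : ∀ x y, IsMidpoint x y (μ x y)) {s t : ℝ}
    (hs : s ∈ Icc (0 : ℝ) 1) (ht : t ∈ Icc (0 : ℝ) 1) (n : ℕ) :
    dist (dyadicChain μ a b n ⌊s * 2 ^ n⌋₊) (dyadicChain μ a b n ⌊t * 2 ^ n⌋₊)
      = |(⌊s * 2 ^ n⌋₊ : ℝ) / 2 ^ n - (⌊t * 2 ^ n⌋₊ : ℝ) / 2 ^ n| * dist a b := by
  have hle : ∀ {r : ℝ}, r ∈ Icc (0 : ℝ) 1 → ⌊r * 2 ^ n⌋₊ ≤ 2 ^ n := fun hr =>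
    Nat.floor_le_of_le (by exact_mod_cast mul_le_of_le_one_left (by positivity) hr.2)
  rw [dist_dyadicChain a b hμ n (hle hs) (hle ht), ← sub_div, abs_div,
    abs_of_pos (by positivity : (0 : ℝ) < 2 ^ n)]
  ring

end Geodesic

theorem exists_isGeodesicSegmentBetween {X : Type*} [MetricSpace X] [CompleteSpace X]
    (h : ∀ x y : X, ∃ m, IsMidpoint x y m) (a b : X) : ∃ G, IsGeodesicSegmentBetween a b G := by
  choose μ hμ using h
  rcases (dist_nonneg (x := a) (y := b)).eq_or_lt with hd | hd
  · refine ⟨_, fun _ => a, rfl, dist_eq_zero.1 hd.symm, fun s hs t ht => ?_, rfl⟩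
    rw [← hd] at hs ht
    simp [le_antisymm hs.2 hs.1, le_antisymm ht.2 ht.1]
  have : Nonempty X := ⟨a⟩
  set γ : ℝ → X := fun s => limUnder atTop fun n => dyadicChain μ a b n ⌊s * 2 ^ n⌋₊
  have hγ : ∀ s ∈ Icc (0 : ℝ) 1,
      Tendsto (fun n => dyadicChain μ a b n ⌊s * 2 ^ n⌋₊) atTop (𝓝 (γ s)) :=
    fun s hs => (cauchySeq_dyadicChain_floor a b hμ hs).tendsto_limUnder
  have hγdist : ∀ s ∈ Icc (0 : ℝ) 1, ∀ t ∈ Icc (0 : ℝ) 1,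
      dist (γ s) (γ t) = |s - t| * dist a b := by
    intro s hs t ht
    have hdyadic : ∀ r : ℝ, 0 ≤ r →
        Tendsto (fun n : ℕ => (⌊r * 2 ^ n⌋₊ : ℝ) / 2 ^ n) atTop (𝓝 r) :=
      fun r hr => (tendsto_nat_floor_mul_div_atTop hr).comp
        (tendsto_pow_atTop_atTop_of_one_lt one_lt_two)
    refine tendsto_nhds_unique ((hγ s hs).dist (hγ t ht)) ?_
    simp_rw [dist_dyadicChain_floor a b hμ hs ht]
    exact (((hdyadic s hs.1).sub (hdyadic t ht.1)).abs).mul_const _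
  have hγ0 : γ 0 = a := by simpa [eq_comm] using hγ 0 (left_mem_Icc.2 zero_le_one)
  have hγ1 : γ 1 = b := by
    refine ((tendsto_const_nhds_iff (l := (atTop : Filter ℕ))).1 ?_).symm
    convert hγ 1 (right_mem_Icc.2 zero_le_one) using 2 with n
    rw [one_mul, ← Nat.cast_ofNat, ← Nat.cast_pow, Nat.floor_natCast, dyadicChain_two_pow]
  refine ⟨_, fun t => γ (t / dist a b), by simpa using hγ0, by simpa [hd.ne'] using hγ1,
    fun s hs t ht => ?_, rfl⟩
  have hmem : ∀ {r : ℝ}, r ∈ Icc 0 (dist a b) → r / dist a b ∈ Icc (0 : ℝ) 1 := fun hr =>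
    ⟨div_nonneg hr.1 hd.le, div_le_one_of_le₀ hr.2 hd.le⟩
  rw [hγdist _ (hmem hs) _ (hmem ht), ← sub_div, abs_div, abs_of_pos hd, div_mul_cancel₀ _ hd.ne']

section Segments

variable {X : Type*} [MetricSpace X] {x y : X} {G : Set X}

theorem IsGeodesicSegmentBetween.isGeodesicSegmentFrom (hG : IsGeodesicSegmentBetween x y G) :
    IsGeodesicSegmentFrom x G :=
  let ⟨γ, h0, _, hiso, hG⟩ := hG
  ⟨dist x y, γ, dist_nonneg, h0, hiso, hG⟩

theorem IsGeodesicSegmentBetween.right_mem (hG : IsGeodesicSegmentBetween x y G) : y ∈ G := by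
  obtain ⟨γ, -, h1, -, rfl⟩ := hG
  exact ⟨dist x y, right_mem_Icc.2 dist_nonneg, h1⟩

theorem IsGeodesicSegmentFrom.left_mem (hG : IsGeodesicSegmentFrom x G) : x ∈ G := by
  obtain ⟨L, γ, hL, h0, -, rfl⟩ := hG
  exact ⟨0, left_mem_Icc.2 hL, h0⟩

theorem IsGeodesicSegmentFrom.isCompact (hG : IsGeodesicSegmentFrom x G) : IsCompact G := by
  obtain ⟨L, γ, -, -, hiso, rfl⟩ := hG
  refine isCompact_Icc.image_of_continuousOn (LipschitzOnWith.of_dist_le' (K := 1) ?_).continuousOn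
  intro s hs t ht
  rw [hiso s hs t ht, one_mul, Real.dist_eq]

theorem IsGeodesicSegmentFrom.midpointClosed (hG : IsGeodesicSegmentFrom x G) :
    MidpointClosed G := by
  obtain ⟨L, γ, -, -, hiso, rfl⟩ := hG
  rintro - ⟨s, hs, rfl⟩ - ⟨t, ht, rfl⟩
  have hst : (s + t) / 2 ∈ Icc 0 L := ⟨by linarith [hs.1, ht.1], by linarith [hs.2, ht.2]⟩
  refine ⟨γ ((s + t) / 2), ⟨_, hst, rfl⟩, ?_, ?_⟩
  · rw [hiso s hs _ hst, hiso s hs t ht, show s - (s + t) / 2 = (s - t) / 2 by ring, abs_div,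
      abs_two]
  · rw [hiso t ht _ hst, hiso s hs t ht, show t - (s + t) / 2 = -((s - t) / 2) by ring, abs_neg,
      abs_div, abs_two]

end Segments

section Asymptotic

variable {X : Type*} [MetricSpace X]

def AsymptoticallyCloser {ι : Type*} (l : Filter ι) (z : ι → X) (x q : X) : Prop :=
  ∀ ε > 0, ∀ᶠ n in l, dist (z n) x < dist (z n) q + ε

theorem asymptoticallyCloser_of_tendsto {ι : Type*} {l : Filter ι} {z s : ι → X} {G : Set X}
    {x q : X} (hq : q ∈ G) (hs : ∀ n, IsNearestPoint (z n) G (s n)) (hsx : Tendsto s l (𝓝 x)) :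
    AsymptoticallyCloser l z x q := fun ε hε => by
  filter_upwards [Metric.tendsto_nhds.1 hsx ε hε] with n hn
  linarith [dist_triangle (z n) (s n) x, (hs n).2 q hq]

theorem isClosed_setOf_asymptoticallyCloser {ι : Type*} (l : Filter ι) (z : ι → X) (x : X) :
    IsClosed {q | AsymptoticallyCloser l z x q} := by
  refine isClosed_of_closure_subset fun q hq ε hε => ?_
  obtain ⟨q', hq', hqq'⟩ := Metric.mem_closure_iff.1 hq (ε / 2) (half_pos hε)
  filter_upwards [hq' (ε / 2) (half_pos hε)] with n hn
  linarith [dist_triangle (z n) q q']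

theorem div_le_sub_of_sq_add_sq_le {a D δ M : ℝ} (ha : 0 ≤ a) (hD : 0 ≤ D) (hDM : D ≤ M)
    (h : a ^ 2 + δ ^ 2 ≤ D ^ 2) (hM : 0 < M) : δ ^ 2 / (2 * M) ≤ D - a := by
  have haD : a ≤ D := (pow_le_pow_iff_left₀ ha hD two_ne_zero).1 (by nlinarith)
  rw [div_le_iff₀ (by positivity)]
  nlinarith

theorem IsCAT0.tendsto_of_forall_asymptoticallyCloser (hX : IsCAT0 X) {C : Set X}
    (hC : IsClosed C) (hCm : MidpointClosed C) {z : ℕ → X} (hzC : ∀ n, z n ∈ C)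
    (hz : Bornology.IsBounded (range z)) {x : X}
    (hcloser : ∀ q ∈ C, AsymptoticallyCloser atTop z x q)
    {G : Set X} (hG : IsCompact G) (hGm : MidpointClosed G) (hxG : x ∈ G) {p : ℕ → X}
    (hp : ∀ n, IsNearestPoint (z n) G (p n)) : Tendsto p atTop (𝓝 x) := by
  obtain ⟨M, hM, hzM⟩ := hz.subset_ball_lt 0 x
  rw [Metric.tendsto_atTop]
  by_contra! hfar
  obtain ⟨δ, hδ, hfar⟩ := hfar
  obtain ⟨φ, hφ, hφδ⟩ := extraction_of_frequently_atTop (frequently_atTop.2 hfar)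
  obtain ⟨p₀, -, ψ, hψ, hp₀⟩ := hG.tendsto_subseq fun n => (hp (φ n)).1
  obtain ⟨p', hp'⟩ := hX.exists_isNearestPoint hC hCm ⟨z 0, hzC 0⟩ p₀
  set κ := δ ^ 2 / (2 * M)
  -- The projection inequality on `G` gives `dist z p ^ 2 + δ ^ 2 ≤ dist z x ^ 2` along `φ`.
  have hgap : ∀ n, κ ≤ dist (z (φ n)) x - dist (z (φ n)) (p (φ n)) := fun n =>
    div_le_sub_of_sq_add_sq_le dist_nonneg dist_nonneg (hzM ⟨φ n, rfl⟩).le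
      (by nlinarith [hX.dist_sq_add_dist_sq_le hGm (hp (φ n)) hxG, hφδ n]) hM
  have hκ : 0 < κ := by positivity
  obtain ⟨n, hcl, hnear⟩ := (((hφ.comp hψ).tendsto_atTop.eventually
    (hcloser p' hp'.1 _ (half_pos hκ))).and (Metric.tendsto_nhds.1 hp₀ _ (half_pos hκ))).exists
  have := hX.dist_le_of_isNearestPoint hCm hp' (hzC (φ (ψ n)))
  have := dist_triangle (z (φ (ψ n))) (p (φ (ψ n))) p₀
  simp only [Function.comp_apply] at hcl hnear
  linarith [hgap (ψ n)]

end Asymptotic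

theorem exists_monotone_forall_tendsto_comp {I X Y : Type*} [Preorder I] [IsDirected I (· ≤ ·)]
    [Nonempty I] [PseudoMetricSpace Y] (μ : X → X → X) (u : I → X) (g : X → I → Y) (y : Y)
    (hg : ∀ q, Tendsto (g q) atTop (𝓝 y)) :
    ∃ α : ℕ → I, Monotone α ∧ ∃ Q : Set X, (∀ a ∈ Q, ∀ b ∈ Q, μ a b ∈ Q) ∧
      (∀ n, u (α n) ∈ Q) ∧ ∀ q ∈ Q, Tendsto (fun n => g q (α n)) atTop (𝓝 y) := by
  classical
  have hnext : ∀ (n : ℕ) (i : I) (S : Finset X),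
      ∃ j, i ≤ j ∧ ∀ q ∈ S, dist (g q j) y < 1 / (n + 1) := fun n i S =>
    ((eventually_ge_atTop i).and ((eventually_all_finset S).2 fun q _ =>
      Metric.tendsto_nhds.1 (hg q) _ Nat.one_div_pos_of_nat)).exists
  choose next hnext_ge hnext_dist using hnext
  let grow : I → Finset X → Finset X := fun i S => insert (u i) (S ∪ Finset.image₂ μ S S)
  -- Stage `n + 1` adds `u (α n)` and the `μ`-combinations of stage `n` to the set; its index
  -- comes after `α n` and makes every `g q`, `q` in the new set, `1 / (n + 1)`-close to `y`.
  let stage : ℕ → I × Finset X := fun n => Nat.rec (Classical.arbitrary I, ∅)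
    (fun n st => (next n st.1 (grow st.1 st.2), grow st.1 st.2)) n
  set α := fun n => (stage n).1
  set S := fun n => (stage n).2
  have hS_succ : ∀ n, S (n + 1) = grow (α n) (S n) := fun n => rfl
  have hS_mono : Monotone S := monotone_nat_of_le_succ fun n => by
    rw [hS_succ]
    exact (Finset.subset_union_left).trans (Finset.subset_insert _ _)
  refine ⟨α, monotone_nat_of_le_succ fun n => hnext_ge _ _ _, ⋃ n, (S n : Set X), ?_, ?_, ?_⟩
  · simp only [mem_iUnion, Finset.mem_coe]
    rintro a ⟨i, ha⟩ b ⟨j, hb⟩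
    refine ⟨max i j + 1, ?_⟩
    rw [hS_succ]
    exact Finset.mem_insert_of_mem (Finset.mem_union_right _ (Finset.mem_image₂_of_mem
      (hS_mono (le_max_left i j) ha) (hS_mono (le_max_right i j) hb)))
  · exact fun n => mem_iUnion.2 ⟨n + 1, Finset.mem_insert_self _ _⟩
  · simp only [mem_iUnion, Finset.mem_coe]
    rintro q ⟨N, hq⟩
    rw [← tendsto_add_atTop_iff_nat 1, tendsto_iff_dist_tendsto_zero]
    refine squeeze_zero' (Eventually.of_forall fun _ => dist_nonneg) ?_
      tendsto_one_div_add_atTop_nhds_zero_nat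
    filter_upwards [eventually_ge_atTop N] with n hn
    exact (hnext_dist _ _ _ q (hS_mono (hn.trans (Nat.le_succ n)) hq)).le

/-- (Eberlein–Smulian analogue.) If a bounded net in a CAT(0)
space converges weakly to `x`, then one can extract a monotone sequence of
indices along which the net converges weakly to `x`. -/
theorem exists_weakly_convergent_subsequence_of_net
    (X : Type*) [MetricSpace X] (hX : IsCAT0 X)
    {I : Type*} [Preorder I] [IsDirected I (· ≤ ·)] [Nonempty I]
    (u : I → X) (hb : Bornology.IsBounded (Set.range u))
    (x : X) (h : WeakConv u x) :
    ∃ α : ℕ → I, Monotone α ∧ WeakConv (u ∘ α) x := by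
  have : CompleteSpace X := hX.1
  choose μ hμ using hX.2.1
  choose seg hseg using exists_isGeodesicSegmentBetween hX.2.1 x
  choose sel hsel using fun q i =>
    (hseg q).isGeodesicSegmentFrom.isCompact.exists_isNearestPoint
      ⟨x, (hseg q).isGeodesicSegmentFrom.left_mem⟩ (u i)
  obtain ⟨α, hα, Q, hQμ, huQ, hQ⟩ := exists_monotone_forall_tendsto_comp μ u sel x
    fun q => h _ (hseg q).isGeodesicSegmentFrom _ (hsel q)
  have hQm : MidpointClosed Q := fun a ha b hb' => ⟨μ a b, hQμ a ha b hb', hμ a b⟩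
  have hcloser : ∀ q ∈ closure Q, AsymptoticallyCloser atTop (u ∘ α) x q :=
    closure_minimal (fun q hq => asymptoticallyCloser_of_tendsto (hseg q).right_mem
      (fun n => hsel q (α n)) (hQ q hq)) (isClosed_setOf_asymptoticallyCloser _ _ _)
  refine ⟨α, hα, fun G hG p hp => ?_⟩
  exact hX.tendsto_of_forall_asymptoticallyCloser isClosed_closure (hQm.closure hX)
    (fun n => subset_closure (huQ n)) (hb.subset (range_comp_subset_range α u)) hcloser
    hG.isCompact hG.midpointClosed hG.left_mem hp
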